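/- arXiv:1904.13299 — 2 statements merged into one kernel-verified Lean document; each statement's English description precedes it below -/
import Mathlib

section
/- Let F : ℝ → ℝ be continuously differentiable with F(r) = 0 and F'(r) ≠ 0. Then the shifted deflated residual G(z) = (1/|z − r| + 1)·F(z) does not tend to 0 as z → r; moreover |G(z)| ≥ |F'(r)|/2 for all z ≠ r sufficiently close to r. -/
open Filter Topology

/-!
Near a simple root `r` the difference quotient `F z / (z - r)` stays close to `F'(r) ≠ 0`, so
eventually `|F z| / |z - r| ≥ |F'(r)| / 2`. The deflated residual dominates this quotient in
absolute value, since `|(1 / |z - r| + σ) F z| = |F z| / |z - r| + σ |F z|` for `σ ≥ 0`.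
-/

theorem HasDerivAt.eventually_lt_norm_slope {𝕜 E : Type*} [NontriviallyNormedField 𝕜]
    [NormedAddCommGroup E] [NormedSpace 𝕜 E] {f : 𝕜 → E} {f' : E} {x : 𝕜} {c : ℝ}
    (hf : HasDerivAt f f' x) (hc : c < ‖f'‖) : ∀ᶠ z in 𝓝[≠] x, c < ‖slope f x z‖ :=
  (hasDerivAt_iff_tendsto_slope.mp hf).norm.eventually (lt_mem_nhds hc)

theorem abs_slope_le_abs_deflation_of_root {F : ℝ → ℝ} {r σ : ℝ} (hFr : F r = 0) (hσ : 0 ≤ σ)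
    (z : ℝ) : |slope F r z| ≤ |(1 / |z - r| + σ) * F z| := by
  have hweight : 0 ≤ 1 / |z - r| + σ := by positivity
  calc |slope F r z| = 1 / |z - r| * |F z| := by
        rw [slope_def_field, hFr, sub_zero, abs_div, one_div_mul_eq_div]
    _ ≤ (1 / |z - r| + σ) * |F z| := by gcongr; linarith
    _ = |(1 / |z - r| + σ) * F z| := by rw [abs_mul, abs_of_nonneg hweight]

theorem not_tendsto_zero_of_eventually_le_norm {α E : Type*} [NormedAddCommGroup E]
    {l : Filter α} [l.NeBot] {g : α → E} {c : ℝ} (hc : 0 < c) (hg : ∀ᶠ a in l, c ≤ ‖g a‖) :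
    ¬ Tendsto g l (𝓝 0) := fun hlim ↦ by
  have hsmall : ∀ᶠ a in l, ‖g a‖ < c := by
    simpa using hlim.norm.eventually (gt_mem_nhds (by simpa using hc))
  obtain ⟨a, hle, hlt⟩ := (hg.and hsmall).exists
  exact hle.not_gt hlt

theorem exists_pos_forall_of_eventually_nhdsNE {p : ℝ → Prop} {r : ℝ} (h : ∀ᶠ z in 𝓝[≠] r, p z) :
    ∃ δ > (0:ℝ), ∀ z : ℝ, z ≠ r → |z - r| < δ → p z := by
  obtain ⟨δ, hδ, hball⟩ := Metric.mem_nhdsWithin_iff.mp h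
  exact ⟨δ, hδ, fun z hz hzδ ↦ hball ⟨by rwa [Metric.mem_ball, Real.dist_eq], hz⟩⟩

theorem one_dim_shifted_deflation_general
    (F : ℝ → ℝ) (r : ℝ) (hFr : F r = 0)
    (hF'r : deriv F r ≠ 0) :
    ¬ Tendsto (fun z => (1 / |z - r| + 1) * F z) (𝓝[≠] r) (𝓝 0) ∧
      ∃ δ > (0:ℝ), ∀ z : ℝ, z ≠ r → |z - r| < δ →
        |deriv F r| / 2 ≤ |(1 / |z - r| + 1) * F z| := by
  have hpos : 0 < |deriv F r| / 2 := by positivity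
  have hslope : ∀ᶠ z in 𝓝[≠] r, |deriv F r| / 2 < |slope F r z| :=
    (differentiableAt_of_deriv_ne_zero hF'r).hasDerivAt.eventually_lt_norm_slope
      (half_lt_self (abs_pos.mpr hF'r))
  have hbound : ∀ᶠ z in 𝓝[≠] r, |deriv F r| / 2 ≤ |(1 / |z - r| + 1) * F z| :=
    hslope.mono fun z hz ↦ hz.le.trans (abs_slope_le_abs_deflation_of_root hFr zero_le_one z)
  exact ⟨not_tendsto_zero_of_eventually_le_norm hpos hbound,
    exists_pos_forall_of_eventually_nhdsNE hbound⟩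

theorem one_dim_shifted_deflation
    (F : ℝ → ℝ) (hF : ContDiff ℝ 1 F) (r : ℝ) (hFr : F r = 0)
    (hF'r : deriv F r ≠ 0) :
    ¬ Tendsto (fun z => (1 / |z - r| + 1) * F z) (𝓝[≠] r) (𝓝 0) ∧
      ∃ δ > (0:ℝ), ∀ z : ℝ, z ≠ r → |z - r| < δ →
        |deriv F r| / 2 ≤ |(1 / |z - r| + 1) * F z| :=
  one_dim_shifted_deflation_general F r hFr hF'r
end

section
/- Let Z and V be real normed spaces, F : D ⊆ Z → V semismooth at z ∈ D with Newton derivative H_F, and let m : D → ℝ be Fréchet differentiable at z with derivative m'(z) ∈ Z*. Then G(w) = m(w)·F(w) is semismooth at z with Newton derivative action H_G(w)h = m(w)·H_F(w)h + (m'(w)h)·F(w), i.e., ‖G(z+h) − G(z) − H_G(z+h)h‖ = o(‖h‖). -/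
/-!
Writing `w = z + h`, the remainder of `G = m • F` splits as
`m w • (F w - F z - H_F w h) + (m w - m z - m' w h) • F z - (m' w h) • (F w - F z)`.
The first term is `O(1) · o(‖h‖)`; the second is `o(‖h‖)` because `m` is differentiable at `z`
and `m'` is continuous there; the third is `O(‖h‖) · o(1)` because `F`, being Lipschitz near `z`,
is continuous at `z`.
-/

open Filter Topology Asymptotics

section NewtonDerivative

variable {𝕜 : Type*} [NontriviallyNormedField 𝕜]
  {Z V : Type*} [NormedAddCommGroup Z] [NormedSpace 𝕜 Z] [NormedAddCommGroup V] [NormedSpace 𝕜 V]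

/-- Unlike in `HasFDerivAt`, the derivative is taken at the perturbed point `z + h`. -/
def HasNewtonDerivAt (F : Z → V) (HF : Z → Z →L[𝕜] V) (z : Z) : Prop :=
  (fun h => F (z + h) - F z - HF (z + h) h) =o[𝓝 0] fun h => h

theorem hasNewtonDerivAt_iff {F : Z → V} {HF : Z → Z →L[𝕜] V} {z : Z} :
    HasNewtonDerivAt F HF z ↔ ∀ ε > (0:ℝ), ∃ δ > (0:ℝ), ∀ h : Z, ‖h‖ < δ →
      ‖F (z + h) - F z - HF (z + h) h‖ ≤ ε * ‖h‖ := by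
  simp only [HasNewtonDerivAt, isLittleO_iff, Metric.eventually_nhds_iff, dist_zero_right]

theorem ContinuousAt.tendsto_comp_add_nhds_zero {X : Type*} [TopologicalSpace X] {f : Z → X}
    {z : Z} (hf : ContinuousAt f z) : Tendsto (fun h => f (z + h)) (𝓝 0) (𝓝 (f z)) :=
  hf.tendsto.comp ((continuous_const_add z).tendsto' 0 z (add_zero z))

section ClmApply

variable {α E F : Type*} [NormedAddCommGroup E] [NormedSpace 𝕜 E] [NormedAddCommGroup F]
  [NormedSpace 𝕜 F] {l : Filter α} {A : α → E →L[𝕜] F} {g : α → E}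

theorem Asymptotics.IsBigO.clm_apply (hA : A =O[l] fun _ => (1 : ℝ)) :
    (fun x => A x (g x)) =O[l] g := by
  refine isBoundedBilinearMap_apply.isBigO_comp.trans ?_
  simpa using hA.norm_left.mul (isBigO_refl g l).norm_norm

theorem Asymptotics.IsLittleO.clm_apply (hA : A =o[l] fun _ => (1 : ℝ)) :
    (fun x => A x (g x)) =o[l] g := by
  refine isBoundedBilinearMap_apply.isBigO_comp.trans_isLittleO ?_
  simpa using hA.norm_left.mul_isBigO (isBigO_refl g l).norm_norm

end ClmApply

theorem HasNewtonDerivAt.smul {F : Z → V} {HF : Z → Z →L[𝕜] V} {z : Z} {m : Z → 𝕜}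
    {m' : Z → Z →L[𝕜] 𝕜} (hF : HasNewtonDerivAt F HF z) (hFc : ContinuousAt F z)
    (hm : HasFDerivAt m (m' z) z) (hm' : ContinuousAt m' z) :
    HasNewtonDerivAt (fun w => m w • F w) (fun w => m w • HF w + (m' w).smulRight (F w)) z := by
  have split : ∀ h, m (z + h) • F (z + h) - m z • F z
      - (m (z + h) • HF (z + h) + (m' (z + h)).smulRight (F (z + h))) h
      = m (z + h) • (F (z + h) - F z - HF (z + h) h)
        + ((m (z + h) - m z - m' z h) - (m' (z + h) - m' z) h) • F z
        - m' (z + h) h • (F (z + h) - F z) := by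
    intro h
    simp only [add_apply, smul_apply, ContinuousLinearMap.smulRight_apply, sub_apply]
    module
  have hm_bdd := hm.continuousAt.tendsto_comp_add_nhds_zero.isBigO_one ℝ
  have hm'_bdd := hm'.tendsto_comp_add_nhds_zero.isBigO_one ℝ
  have hm'_cont : (fun h => m' (z + h) - m' z) =o[𝓝 0] fun _ => (1 : ℝ) :=
    (isLittleO_one_iff ℝ).2 (tendsto_sub_nhds_zero_iff.2 hm'.tendsto_comp_add_nhds_zero)
  have hF_cont : (fun h => F (z + h) - F z) =o[𝓝 0] fun _ => (1 : ℝ) :=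
    (isLittleO_one_iff ℝ).2 (tendsto_sub_nhds_zero_iff.2 hFc.tendsto_comp_add_nhds_zero)
  have hm_diff := hasFDerivAt_iff_isLittleO_nhds_zero.1 hm
  unfold HasNewtonDerivAt at hF ⊢
  rw [← isLittleO_norm_right] at hF hm_diff ⊢
  have h₁ := hm_bdd.smul_isLittleO hF
  have h₂ := (hm_diff.sub (isLittleO_norm_right.2 hm'_cont.clm_apply)).smul_isBigO
    (isBigO_const_const (F z) (one_ne_zero' ℝ) (𝓝 (0 : Z)))
  have h₃ := (isBigO_norm_right.2 (hm'_bdd.clm_apply (g := fun h => h))).smul_isLittleO hF_cont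
  simp only [smul_eq_mul, one_mul, mul_one] at h₁ h₂ h₃
  exact ((h₁.add h₂).sub h₃).congr_left fun h => (split h).symm

end NewtonDerivative

theorem newton_derivative_product_rule_general
    {Z V : Type*} [NormedAddCommGroup Z] [NormedSpace ℝ Z]
    [NormedAddCommGroup V] [NormedSpace ℝ V]
    (z : Z)
    (F : Z → V) (HF : Z → (Z →L[ℝ] V))
    (K : NNReal) (s : Set Z) (hs : s ∈ 𝓝 z) (hlip : LipschitzOnWith K F s)
    (hss : ∀ ε > (0:ℝ), ∃ δ > (0:ℝ), ∀ h : Z, ‖h‖ < δ →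
      ‖F (z + h) - F z - HF (z + h) h‖ ≤ ε * ‖h‖)
    (m : Z → ℝ) (m' : Z → (Z →L[ℝ] ℝ))
    (hm : ∀ w ∈ s, HasFDerivAt m (m' w) w) (hm' : ContinuousAt m' z) :
    ∀ ε > (0:ℝ), ∃ δ > (0:ℝ), ∀ h : Z, ‖h‖ < δ →
      ‖m (z + h) • F (z + h) - m z • F z -
        (m (z + h) • HF (z + h) h + (m' (z + h) h) • F (z + h))‖ ≤ ε * ‖h‖ :=
  hasNewtonDerivAt_iff.1 <|
    (hasNewtonDerivAt_iff.2 hss).smul (hlip.continuousOn.continuousAt hs)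
      (hm z (mem_of_mem_nhds hs)) hm'

theorem newton_derivative_product_rule
    {Z V : Type*} [NormedAddCommGroup Z] [NormedSpace ℝ Z]
    [NormedAddCommGroup V] [NormedSpace ℝ V]
    (D : Set Z) (hD : IsOpen D) (z : Z) (hz : z ∈ D)
    (F : Z → V) (HF : Z → (Z →L[ℝ] V))
    (K : NNReal) (s : Set Z) (hs : s ∈ 𝓝 z) (hlip : LipschitzOnWith K F s)
    (hss : ∀ ε > (0:ℝ), ∃ δ > (0:ℝ), ∀ h : Z, ‖h‖ < δ →
      ‖F (z + h) - F z - HF (z + h) h‖ ≤ ε * ‖h‖)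
    (m : Z → ℝ) (m' : Z → (Z →L[ℝ] ℝ))
    (hm : ∀ w ∈ s, HasFDerivAt m (m' w) w) (hm' : ContinuousAt m' z) :
    ∀ ε > (0:ℝ), ∃ δ > (0:ℝ), ∀ h : Z, ‖h‖ < δ →
      ‖m (z + h) • F (z + h) - m z • F z -
        (m (z + h) • HF (z + h) h + (m' (z + h) h) • F (z + h))‖ ≤ ε * ‖h‖ :=
  newton_derivative_product_rule_general z F HF K s hs hlip hss m m' hm hm'
end
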